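/- Let D > 0 and define f_n(α) = n^{−2α/(1+2α)}. For every α ∈ [D,2D], every K > 0 and every integer n ≥ e^{4K}: e^{2K/(1+4D)²} f_n(α) ≤ f_n(α − K/log n) ≤ e^{2K/(1/2+2D)²} f_n(α); and, if in addition α + K/log n ≤ 2D, e^{−2K/(1+2D)²} f_n(α) ≤ f_n(α + K/log n) ≤ e^{−2K/(1+4D)²} f_n(α). -/
import Mathlib


open Real

noncomputable section

/-- `f_n(α) = n^{−2α/(1+2α)}`. -/
def fpow (n : ℕ) (α : ℝ) : ℝ := (n : ℝ) ^ (-(2 * α / (1 + 2 * α)))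

lemma key_diff (a h L : ℝ) (hL : L ≠ 0) (d0 : 1 + 2 * a ≠ 0) (d1 : 1 + 2 * (a + h) ≠ 0) :
    (-(2 * (a + h) / (1 + 2 * (a + h)))) * L - (-(2 * a / (1 + 2 * a))) * L
      = -(2 * (h * L)) / ((1 + 2 * a) * (1 + 2 * (a + h))) := by
  field_simp
  ring

/-- comparison of `f_n` at `α` and at `α ∓ K/log n`. -/
theorem stmt_8 (D : ℝ) (hD : 0 < D) (α : ℝ) (hα : α ∈ Set.Icc D (2 * D))
    (K : ℝ) (hK : 0 < K) (n : ℕ) (hn : Real.exp (4 * K) ≤ (n : ℝ)) :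
    (Real.exp (2 * K / (1 + 4 * D) ^ 2) * fpow n α ≤ fpow n (α - K / Real.log n) ∧
      fpow n (α - K / Real.log n) ≤ Real.exp (2 * K / (1 / 2 + 2 * D) ^ 2) * fpow n α) ∧
    (α + K / Real.log n ≤ 2 * D →
      Real.exp (-(2 * K) / (1 + 2 * D) ^ 2) * fpow n α ≤ fpow n (α + K / Real.log n) ∧
      fpow n (α + K / Real.log n) ≤ Real.exp (-(2 * K) / (1 + 4 * D) ^ 2) * fpow n α) := by
  obtain ⟨hα1, hα2⟩ := hα
  have hn1 : (1 : ℝ) < n := by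
    calc (1 : ℝ) = Real.exp 0 := Real.exp_zero.symm
    _ < Real.exp (4 * K) := Real.exp_lt_exp.mpr (by linarith)
    _ ≤ n := hn
  have hn0 : (0 : ℝ) < n := by linarith
  set L := Real.log n with hLdef
  have hL : 0 < L := Real.log_pos hn1
  have h4K : 4 * K ≤ L := (Real.le_log_iff_exp_le hn0).mpr hn
  set h := K / L with hhdef
  have hh : 0 < h := div_pos hK hL
  have hKL : h * L = K := div_mul_cancel₀ K hL.ne'
  have hh4 : h ≤ 1 / 4 := by nlinarith
  have fp : ∀ x : ℝ, fpow n x = Real.exp (-(2 * x / (1 + 2 * x)) * L) := by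
    intro x
    rw [fpow, Real.rpow_def_of_pos hn0, mul_comm]
  have d0 : (0 : ℝ) < 1 + 2 * α := by linarith
  have dm : (0 : ℝ) < 1 + 2 * (α - h) := by linarith
  have dp : (0 : ℝ) < 1 + 2 * (α + h) := by linarith
  have eqm : (-(2 * (α - h) / (1 + 2 * (α - h)))) * L - (-(2 * α / (1 + 2 * α))) * L
      = 2 * K / ((1 + 2 * α) * (1 + 2 * (α - h))) := by
    have := key_diff α (-h) L hL.ne' d0.ne' (by rw [show α + -h = α - h by ring]; exact dm.ne')
    rw [show α + -h = α - h by ring] at this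
    rw [this, show -h * L = -(h * L) by ring, hKL]
    ring
  have eqp : (-(2 * (α + h) / (1 + 2 * (α + h)))) * L - (-(2 * α / (1 + 2 * α))) * L
      = -(2 * K) / ((1 + 2 * α) * (1 + 2 * (α + h))) := by
    have := key_diff α h L hL.ne' d0.ne' dp.ne'
    rw [this, hKL]
  have prodm_pos : (0 : ℝ) < (1 + 2 * α) * (1 + 2 * (α - h)) := mul_pos d0 dm
  have prodp_pos : (0 : ℝ) < (1 + 2 * α) * (1 + 2 * (α + h)) := mul_pos d0 dp
  have prodm_ub : (1 + 2 * α) * (1 + 2 * (α - h)) ≤ (1 + 4 * D) ^ 2 := by nlinarith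
  have prodm_lb : (1 / 2 + 2 * D) ^ 2 ≤ (1 + 2 * α) * (1 + 2 * (α - h)) := by nlinarith
  simp only [fp]
  constructor
  · constructor
    · rw [← Real.exp_add, Real.exp_le_exp]
      have : 2 * K / (1 + 4 * D) ^ 2 ≤ 2 * K / ((1 + 2 * α) * (1 + 2 * (α - h))) := by
        apply div_le_div_of_nonneg_left (by linarith) prodm_pos prodm_ub
      linarith [eqm]
    · rw [← Real.exp_add, Real.exp_le_exp]
      have : 2 * K / ((1 + 2 * α) * (1 + 2 * (α - h))) ≤ 2 * K / (1 / 2 + 2 * D) ^ 2 := by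
        apply div_le_div_of_nonneg_left (by linarith) (by nlinarith) prodm_lb
      linarith [eqm]
  · intro hcond
    have prodp_ub : (1 + 2 * α) * (1 + 2 * (α + h)) ≤ (1 + 4 * D) ^ 2 := by
      have h1 : 1 + 2 * α ≤ 1 + 4 * D := by linarith
      have h2 : 1 + 2 * (α + h) ≤ 1 + 4 * D := by linarith
      calc (1 + 2 * α) * (1 + 2 * (α + h)) ≤ (1 + 4 * D) * (1 + 4 * D) :=
            mul_le_mul h1 h2 dp.le (by linarith)
        _ = (1 + 4 * D) ^ 2 := (sq (1 + 4 * D)).symm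
    have prodp_lb : (1 + 2 * D) ^ 2 ≤ (1 + 2 * α) * (1 + 2 * (α + h)) := by
      have h1 : 1 + 2 * D ≤ 1 + 2 * α := by linarith
      have h2 : 1 + 2 * D ≤ 1 + 2 * (α + h) := by linarith
      calc (1 + 2 * D) ^ 2 = (1 + 2 * D) * (1 + 2 * D) := sq (1 + 2 * D)
        _ ≤ (1 + 2 * α) * (1 + 2 * (α + h)) := mul_le_mul h1 h2 (by linarith) d0.le
    constructor
    · rw [← Real.exp_add, Real.exp_le_exp]
      have : 2 * K / ((1 + 2 * α) * (1 + 2 * (α + h))) ≤ 2 * K / (1 + 2 * D) ^ 2 := by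
        apply div_le_div_of_nonneg_left (by linarith) (by positivity) prodp_lb
      have hneg : -(2 * K) / (1 + 2 * D) ^ 2 ≤ -(2 * K) / ((1 + 2 * α) * (1 + 2 * (α + h))) := by
        rw [neg_div, neg_div]; linarith
      linarith [eqp]
    · rw [← Real.exp_add, Real.exp_le_exp]
      have : 2 * K / (1 + 4 * D) ^ 2 ≤ 2 * K / ((1 + 2 * α) * (1 + 2 * (α + h))) := by
        apply div_le_div_of_nonneg_left (by linarith) prodp_pos prodp_ub
      have hneg : -(2 * K) / ((1 + 2 * α) * (1 + 2 * (α + h))) ≤ -(2 * K) / (1 + 4 * D) ^ 2 := by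
        rw [neg_div, neg_div]; linarith
      linarith [eqp]
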